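/- arXiv:dg-ga/9706001 — 2 statements merged into one kernel-verified Lean document; each statement's English description precedes it below -/
import Mathlib

section
/- Let P be a Poisson algebra over ℝ with identity. Suppose that the derived ideal D = span{ {f,g} : f,g ∈ P } has codimension 1 as a linear subspace of P, and that for every f ∈ P, f² ∈ D implies f = 0. Then every finite-codimensional Lie ideal of P contains D; in particular, every finite-codimensional Lie ideal of P has codimension at most 1. -/
/-!
Let `L` be a finite-codimensional Lie ideal and `M = {f | {f, P} ⊆ L}`. Jacobi makes `M` a Lie
ideal, Leibniz and antisymmetry make it a unital subalgebra, and it has finite codimension; hence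
the largest associative ideal `I ⊆ M` is a Poisson ideal of finite codimension. Brackets act on
the finite-dimensional algebra `P ⧸ I` by derivations, so `x ↦ tr (x · -)` vanishes on `D` and on
`I` but not at `1`; as `D` has codimension one, `I ⊆ D`. The hypothesis on squares then makes
`P ⧸ I` reduced, and a finite-dimensional reduced algebra in characteristic zero has no nonzero
derivations (minimal polynomials are separable), so every bracket lies in `I`. Thus
`D ⊆ I ⊆ M`, and `1 ∈ M \ D` forces `M = P`, i.e. `D ⊆ L`.
-/

open Polynomial Module

section FiniteCodim

variable {K V W U : Type*} [Field K] [AddCommGroup V] [Module K V] [AddCommGroup W] [Module K W]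
  [AddCommGroup U] [Module K U]

theorem LinearMap.finiteDimensional_quotient_ker_compr₂_mkQ (B : V →ₗ[K] W →ₗ[K] U)
    {S : Submodule K V} {T : Submodule K W} {N : Submodule K U}
    [FiniteDimensional K (V ⧸ S)] [FiniteDimensional K (W ⧸ T)] [FiniteDimensional K (U ⧸ N)]
    (hB : ∀ s ∈ S, ∀ t ∈ T, B s t ∈ N) (hS : ker (B.compr₂ N.mkQ) ≤ S) :
    FiniteDimensional K (V ⧸ ker (B.compr₂ N.mkQ)) := by
  let b := finBasis K (W ⧸ T)
  let t : Fin (finrank K (W ⧸ T)) → W := fun k => (b k).out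
  let χ : V →ₗ[K] (V ⧸ S) × (Fin (finrank K (W ⧸ T)) → U ⧸ N) :=
    S.mkQ.prod (pi fun k => N.mkQ ∘ₗ B.flip (t k))
  -- on `S`, `B v` maps `T` into `N`, so it suffices to test `B v` on lifts of a basis of `W ⧸ T`
  have hχ : ker χ = ker (B.compr₂ N.mkQ) := by
    ext v
    rw [mem_ker, mem_ker, LinearMap.ext_iff]
    simp only [χ, prod_apply, Function.prod_apply, Submodule.mkQ_apply, Prod.ext_iff,
      Prod.fst_zero, Prod.snd_zero, Submodule.Quotient.mk_eq_zero, funext_iff, pi_apply, coe_comp,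
      Function.comp_apply, flip_apply, Pi.zero_apply, compr₂_apply, zero_apply]
    refine ⟨fun ⟨hvS, hvt⟩ w => ?_, fun hv => ⟨hS ?_, fun k => hv _⟩⟩
    · set c := b.repr (T.mkQ w)
      have hw : w - ∑ k, c k • t k ∈ T := by
        rw [← Submodule.Quotient.mk_eq_zero, Submodule.Quotient.mk_sub, sub_eq_zero]
        change T.mkQ w = T.mkQ _
        simp only [map_sum, map_smul, t, Submodule.mkQ_apply, Submodule.Quotient.mk_out]
        exact (b.sum_repr _).symm
      have hBw : B v w = B v (w - ∑ k, c k • t k) + ∑ k, c k • B v (t k) := by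
        simp [map_sum]
      rw [hBw]
      exact N.add_mem (hB v hvS _ hw) (N.sum_mem fun k _ => N.smul_mem _ (hvt k))
    · exact mem_ker.mpr (LinearMap.ext fun w => by simpa using hv w)
  rw [← hχ]
  exact LinearEquiv.finiteDimensional (quotKerEquivRange χ).symm

end FiniteCodim

namespace Derivation

def quotient {R A : Type*} [CommRing R] [CommRing A] [Algebra R A] (D : Derivation R A A)
    (I : Ideal A) (hI : ∀ x ∈ I, D x ∈ I) : Derivation R (A ⧸ I) (A ⧸ I) :=
  mk' ((Submodule.Quotient.restrictScalarsEquiv R I).toLinearMap ∘ₗ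
      (I.restrictScalars R).mapQ (I.restrictScalars R) D.toLinearMap hI ∘ₗ
      (Submodule.Quotient.restrictScalarsEquiv R I).symm.toLinearMap) fun x y => by
    obtain ⟨a, rfl⟩ := Ideal.Quotient.mk_surjective x
    obtain ⟨b, rfl⟩ := Ideal.Quotient.mk_surjective y
    change Ideal.Quotient.mk I (D (a * b)) =
      _ • Ideal.Quotient.mk I (D b) + _ • Ideal.Quotient.mk I (D a)
    simp [leibniz]

theorem eq_zero_of_isReduced {K A M : Type*} [Field K] [PerfectField K] [CommRing A]
    [Algebra K A] [FiniteDimensional K A] [IsReduced A] [AddCommGroup M] [Module A M] [Module K M]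
    [IsScalarTower K A M] (D : Derivation K A M) : D = 0 := by
  ext x
  have hsep : (minpoly K x).Separable :=
    PerfectField.separable_iff_squarefree.mpr
      ((minpoly.isRadical K x).squarefree (minpoly.ne_zero (IsIntegral.of_finite K x)))
  obtain ⟨a, b, hab⟩ := hsep
  have key := congrArg (fun p => aeval x p • D x) hab
  simp only [map_add, map_mul, minpoly.aeval, map_one, one_smul, mul_zero, zero_add, mul_smul,
    ← map_aeval] at key
  simpa using key.symm

end Derivation

theorem Algebra.trace_derivation_eq_zero {R A : Type*} [CommRing R] [CommRing A]
    [Algebra R A] [Module.Free R A] [Module.Finite R A] (D : Derivation R A A) (a : A) :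
    Algebra.trace R A (D a) = 0 := by
  have h : Algebra.lmul R A (D a) = D.toLinearMap * Algebra.lmul R A a -
      Algebra.lmul R A a * D.toLinearMap := by
    ext b
    simp [Derivation.leibniz, mul_comm]
  rw [Algebra.trace_apply, h, map_sub, LinearMap.trace_mul_comm, sub_self]

section IdealCore

variable {R A : Type*} [CommRing R] [CommRing A] [Algebra R A]

def idealCore (M : Submodule R A) : Ideal A where
  carrier := {x | ∀ h, x * h ∈ M}
  add_mem' ha hb h := by rw [add_mul]; exact M.add_mem (ha h) (hb h)
  zero_mem' h := by rw [zero_mul]; exact M.zero_mem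
  smul_mem' c x hx h := by rw [smul_eq_mul, mul_comm c, mul_assoc]; exact hx _

theorem mem_idealCore {M : Submodule R A} {x : A} : x ∈ idealCore M ↔ ∀ h, x * h ∈ M :=
  Iff.rfl

theorem idealCore_le (M : Submodule R A) : (idealCore M).restrictScalars R ≤ M := fun x hx => by
  simpa using hx 1

theorem finiteDimensional_quotient_idealCore {K A : Type*} [Field K] [CommRing A] [Algebra K A]
    {M : Submodule K A} [FiniteDimensional K (A ⧸ M)]
    (hM : ∀ a ∈ M, ∀ b ∈ M, a * b ∈ M) :
    FiniteDimensional K (A ⧸ idealCore M) := by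
  have hker :
      (idealCore M).restrictScalars K = LinearMap.ker ((LinearMap.mul K A).compr₂ M.mkQ) := by
    ext x
    simp [mem_idealCore, LinearMap.ext_iff]
  have := (LinearMap.mul K A).finiteDimensional_quotient_ker_compr₂_mkQ hM
    (hker ▸ idealCore_le M)
  rw [← hker] at this
  exact LinearEquiv.finiteDimensional (Submodule.Quotient.restrictScalarsEquiv K (idealCore M))

end IdealCore

theorem isCoatom_of_finrank_quotient_eq_one {K V : Type*} [DivisionRing K] [AddCommGroup V]
    [Module K V] {W : Submodule K V} (h : finrank K (V ⧸ W) = 1) : IsCoatom W :=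
  isSimpleModule_iff_isCoatom.mp (isSimpleModule_iff_finrank_eq_one.mpr h)

namespace PoissonBracket

section CommRing

variable {K P : Type*} [CommRing K] [CommRing P] [Algebra K P] (br : P →ₗ[K] P →ₗ[K] P)

def derived : Submodule K P :=
  Submodule.span K {x | ∃ f g, x = br f g}

def hamiltonian (leibniz : ∀ f g h : P, br f (g * h) = br f g * h + g * br f h) (f : P) :
    Derivation K P P :=
  Derivation.mk' (br f) fun a b => by rw [leibniz, smul_eq_mul, smul_eq_mul]; ring

def normalizer (L : Submodule K P) : Submodule K P :=
  LinearMap.ker (br.compr₂ L.mkQ)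

variable {br}

theorem mem_normalizer {L : Submodule K P} {f : P} :
    f ∈ normalizer br L ↔ ∀ g, br f g ∈ L := by
  simp [normalizer, LinearMap.ext_iff]

theorem bracket_one_right (leibniz : ∀ f g h : P, br f (g * h) = br f g * h + g * br f h)
    (g : P) : br g 1 = 0 :=
  (hamiltonian br leibniz g).map_one_eq_zero

theorem bracket_mul_left (anti : ∀ f g : P, br f g = - br g f)
    (leibniz : ∀ f g h : P, br f (g * h) = br f g * h + g * br f h) (a b g : P) :
    br (a * b) g = br a (b * g) + br b (a * g) := by
  linear_combination anti (a * b) g - leibniz g a b - leibniz a b g - leibniz b a g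
    - g * anti a b - b * anti a g - a * anti b g

theorem one_mem_normalizer (anti : ∀ f g : P, br f g = - br g f)
    (leibniz : ∀ f g h : P, br f (g * h) = br f g * h + g * br f h) (L : Submodule K P) :
    1 ∈ normalizer br L :=
  mem_normalizer.mpr fun g => by
    rw [anti, bracket_one_right leibniz, neg_zero]
    exact L.zero_mem

theorem mul_mem_normalizer (anti : ∀ f g : P, br f g = - br g f)
    (leibniz : ∀ f g h : P, br f (g * h) = br f g * h + g * br f h) {L : Submodule K P}
    {a b : P} (ha : a ∈ normalizer br L) (hb : b ∈ normalizer br L) :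
    a * b ∈ normalizer br L := by
  rw [mem_normalizer] at *
  intro g
  rw [bracket_mul_left anti leibniz]
  exact L.add_mem (ha _) (hb _)

theorem bracket_mem_normalizer
    (jacobi : ∀ f g h : P, br f (br g h) = br (br f g) h + br g (br f h))
    {L : Submodule K P} (hL : ∀ f, ∀ l ∈ L, br f l ∈ L) (f : P) {a : P}
    (ha : a ∈ normalizer br L) : br f a ∈ normalizer br L := by
  rw [mem_normalizer] at *
  intro g
  have hjac : br (br f a) g = br f (br a g) - br a (br f g) := by rw [jacobi]; ring
  rw [hjac]
  exact L.sub_mem (hL f _ (ha g)) (ha _)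

theorem bracket_mem_idealCore (leibniz : ∀ f g h : P, br f (g * h) = br f g * h + g * br f h)
    {M : Submodule K P} (hM : ∀ f, ∀ m ∈ M, br f m ∈ M) (f : P) {x : P}
    (hx : x ∈ idealCore M) : br f x ∈ idealCore M := by
  rw [mem_idealCore] at *
  intro h
  have hleib : br f x * h = br f (x * h) - x * br f h := by rw [leibniz]; ring
  rw [hleib]
  exact M.sub_mem (hM f _ (hx h)) (hx _)

end CommRing

section Field

variable {K P : Type*} [Field K] [CommRing P] [Algebra K P] {br : P →ₗ[K] P →ₗ[K] P}

theorem finiteDimensional_quotient_normalizer {L : Submodule K P} [FiniteDimensional K (P ⧸ L)]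
    (hL : ∀ f, ∀ l ∈ L, br f l ∈ L) : FiniteDimensional K (P ⧸ normalizer br L) :=
  br.finiteDimensional_quotient_ker_compr₂_mkQ (S := ⊤) (fun _ _ l hl => hL _ l hl) le_top

variable [CharZero K]

theorem restrictScalars_le_derived
    (leibniz : ∀ f g h : P, br f (g * h) = br f g * h + g * br f h)
    (hD : IsCoatom (derived br)) {I : Ideal P} [FiniteDimensional K (P ⧸ I)]
    (hI : ∀ f, ∀ x ∈ I, br f x ∈ I) (hItop : I ≠ ⊤) :
    I.restrictScalars K ≤ derived br := by
  have := Ideal.Quotient.nontrivial_iff.mpr hItop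
  let τ : P →ₗ[K] K := Algebra.trace K (P ⧸ I) ∘ₗ (Ideal.Quotient.mkₐ K I).toLinearMap
  have hτ_derived : derived br ≤ LinearMap.ker τ := Submodule.span_le.mpr <| by
    rintro _ ⟨f, g, rfl⟩
    show Algebra.trace K (P ⧸ I) (Ideal.Quotient.mk I (br f g)) = 0
    exact Algebra.trace_derivation_eq_zero ((hamiltonian br leibniz f).quotient I (hI f))
      (Ideal.Quotient.mk I g)
  have hτ_one : τ 1 ≠ 0 := by
    have : τ 1 = finrank K (P ⧸ I) := by
      simpa [τ] using Algebra.trace_algebraMap (R := K) (S := P ⧸ I) 1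
    rw [this]
    exact Nat.cast_ne_zero.mpr finrank_pos.ne'
  have hker : LinearMap.ker τ = derived br :=
    (hD.le_iff.mp hτ_derived).resolve_left fun h => hτ_one (by simp [← LinearMap.mem_ker, h])
  intro x hx
  rw [← hker, LinearMap.mem_ker]
  show Algebra.trace K _ (Ideal.Quotient.mk I x) = 0
  rw [Ideal.Quotient.eq_zero_iff_mem.mpr hx, map_zero]

theorem derived_le_restrictScalars
    (leibniz : ∀ f g h : P, br f (g * h) = br f g * h + g * br f h)
    (hD : IsCoatom (derived br)) (hsq : ∀ f : P, f ^ 2 ∈ derived br → f = 0)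
    (I : Ideal P) [FiniteDimensional K (P ⧸ I)] (hI : ∀ f, ∀ x ∈ I, br f x ∈ I) :
    derived br ≤ I.restrictScalars K := by
  rcases eq_or_ne I ⊤ with rfl | hItop
  · simp
  have hID := restrictScalars_le_derived leibniz hD hI hItop
  have : IsReduced (P ⧸ I) := (isReduced_iff_pow_one_lt 2 one_lt_two).mpr fun y hy => by
    obtain ⟨f, rfl⟩ := Ideal.Quotient.mk_surjective y
    rw [← map_pow, Ideal.Quotient.eq_zero_iff_mem] at hy
    rw [hsq f (hID hy), map_zero]
  refine Submodule.span_le.mpr ?_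
  rintro _ ⟨f, g, rfl⟩
  rw [SetLike.mem_coe, Submodule.restrictScalars_mem, ← Ideal.Quotient.eq_zero_iff_mem]
  have hzero := Derivation.eq_zero_of_isReduced ((hamiltonian br leibniz f).quotient I (hI f))
  exact congrArg (fun d => d (Ideal.Quotient.mk I g)) hzero

end Field

end PoissonBracket

open PoissonBracket

/-- Let `P` be a unital Poisson algebra over `ℝ` whose derived ideal
`D = span {P,P}` has codimension 1, and suppose `f² ∈ D → f = 0`. Then every
finite-codimensional Lie ideal of `P` contains `D`, and hence has codimension at most 1. -/
theorem finite_codim_lie_ideal_contains_derived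
    {P : Type*} [CommRing P] [Algebra ℝ P]
    (br : P →ₗ[ℝ] P →ₗ[ℝ] P)
    (anti : ∀ f g : P, br f g = - br g f)
    (jacobi : ∀ f g h : P, br f (br g h) = br (br f g) h + br g (br f h))
    (leibniz : ∀ f g h : P, br f (g * h) = br f g * h + g * br f h)
    (hcodim : Module.finrank ℝ (P ⧸ Submodule.span ℝ {x : P | ∃ f g : P, x = br f g}) = 1)
    (hsq : ∀ f : P, f ^ 2 ∈ Submodule.span ℝ {x : P | ∃ f g : P, x = br f g} → f = 0) :
    ∀ L : Submodule ℝ P, (∀ f : P, ∀ l ∈ L, br f l ∈ L) →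
      FiniteDimensional ℝ (P ⧸ L) →
      Submodule.span ℝ {x : P | ∃ f g : P, x = br f g} ≤ L ∧
      Module.finrank ℝ (P ⧸ L) ≤ 1 := by
  intro L hL _
  change finrank ℝ (P ⧸ derived br) = 1 at hcodim
  change derived br ≤ L ∧ _
  have hD : IsCoatom (derived br) := isCoatom_of_finrank_quotient_eq_one hcodim
  have one_notMem : (1 : P) ∉ derived br := fun h1 => hD.ne_top <| by
    have h10 : (1 : P) = 0 := hsq 1 (by rwa [one_pow])
    exact eq_top_iff.mpr fun x _ => by rw [← mul_one x, h10, mul_zero]; exact zero_mem _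
  have : FiniteDimensional ℝ (P ⧸ normalizer br L) := finiteDimensional_quotient_normalizer hL
  have : FiniteDimensional ℝ (P ⧸ idealCore (normalizer br L)) :=
    finiteDimensional_quotient_idealCore fun _ ha _ hb => mul_mem_normalizer anti leibniz ha hb
  have hDM : derived br ≤ normalizer br L :=
    (derived_le_restrictScalars leibniz hD hsq _
      (bracket_mem_idealCore leibniz (bracket_mem_normalizer jacobi hL))).trans (idealCore_le _)
  have hM : normalizer br L = ⊤ := (hD.le_iff.mp hDM).resolve_right fun h =>
    one_notMem (h ▸ one_mem_normalizer anti leibniz L)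
  have hDL : derived br ≤ L := Submodule.span_le.mpr <| by
    rintro _ ⟨f, g, rfl⟩
    exact mem_normalizer.mp (hM ▸ Submodule.mem_top) g
  have : FiniteDimensional ℝ (P ⧸ derived br) := Module.finite_of_finrank_eq_succ hcodim
  exact ⟨hDL, hcodim ▸ LinearMap.finrank_le_finrank_of_surjective
    (Submodule.factor_surjective hDL)⟩
end

section
/- Let g be a finite-dimensional semisimple real Lie algebra equipped with an invariant inner product, i.e. a positive-definite symmetric bilinear form B with B([x,y],z) + B(y,[x,z]) = 0 for all x,y,z ∈ g. Let h ∈ g be such that the centralizer g_h = {f ∈ g : [f,h] = 0} is an abelian subalgebra. Then the Lie subalgebra of g generated by the subspace [g,h] = {[x,h] : x ∈ g} is all of g. -/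
/-!
Let `S` be the Lie subalgebra generated by `[g, h]`. By invariance, a vector orthogonal to
`[g, h]` commutes with `h`, so `g = span [g, h] ⊕ [g, h]ᗮ` with the second summand inside the
centralizer `g_h`. Since `[k, [w, h]] = [[k, w], h]` for `k ∈ g_h`, the centralizer normalizes `S`,
and so does `S` itself; hence `S` is an ideal. Its orthogonal complement is again an ideal, it lies
in `g_h` and is therefore abelian, hence zero, and `S = g`.
-/

open LinearMap (BilinForm)

namespace LinearMap.BilinForm

variable {K V : Type*} [Field K] [AddCommGroup V] [Module K V] [FiniteDimensional K V]

theorem isCompl_orthogonal_of_anisotropic {B : BilinForm K V} (hB : B.toQuadraticMap.Anisotropic)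
    (W : Submodule K V) : IsCompl W (B.orthogonal W) := by
  have hdisj : Disjoint W (B.orthogonal W) := by
    rw [Submodule.disjoint_def]
    intro v hvW hvW'
    exact hB v (hvW' v hvW)
  have hker : LinearMap.ker B = ⊥ :=
    LinearMap.separatingLeft_iff_ker_eq_bot.1 (separatingLeft_of_anisotropic hB)
  refine ⟨hdisj, codisjoint_iff.2 (Submodule.eq_top_of_finrank_eq ?_)⟩
  have := finrank_add_finrank_orthogonal' (B := B) W
  rwa [hker, inf_bot_eq, finrank_bot, add_zero, ← Submodule.finrank_sup_add_finrank_inf_eq,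
    hdisj.eq_bot, finrank_bot, add_zero] at this

end LinearMap.BilinForm

namespace LieSubalgebra

variable {R L : Type*} [CommRing R] [LieRing L] [LieAlgebra R L]

theorem mem_normalizer_lieSpan_of_forall_lie_mem {s : Set L} {x : L}
    (hx : ∀ y ∈ s, ⁅x, y⁆ ∈ lieSpan R L s) : x ∈ (lieSpan R L s).normalizer := by
  rw [mem_normalizer_iff]
  intro y hy
  induction hy using lieSpan_induction with
  | mem y hy => exact hx y hy
  | zero => simp
  | add y z _ _ hy hz => simpa only [lie_add] using add_mem hy hz
  | smul t y _ hy => simpa only [lie_smul] using SMulMemClass.smul_mem t hy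
  | lie y z hy hz hxy hxz =>
    rw [leibniz_lie]
    exact add_mem (lie_mem _ hxy hz) (lie_mem _ hy hxz)

end LieSubalgebra

section InvariantForm

open LieSubalgebra

variable {R L : Type*} [CommRing R] [LieRing L] [LieAlgebra R L]

theorem lie_eq_zero_of_forall_apply_lie_eq_zero {Φ : BilinForm R L} (hΦ : Φ.lieInvariant L)
    (hsep : Φ.SeparatingLeft) {h k : L} (hk : ∀ w : L, Φ ⁅w, h⁆ k = 0) : ⁅k, h⁆ = 0 := by
  refine hsep _ fun z => ?_
  rw [hΦ, ← lie_skew k z, map_neg, neg_neg, ← neg_neg (Φ h ⁅z, k⁆), ← hΦ, hk, neg_zero]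

theorem mem_normalizer_lieSpan_of_lie_eq_zero {h k : L} (hk : ⁅k, h⁆ = 0) :
    k ∈ (lieSpan R L {v : L | ∃ w : L, v = ⁅w, h⁆}).normalizer := by
  refine mem_normalizer_lieSpan_of_forall_lie_mem ?_
  rintro _ ⟨w, rfl⟩
  rw [leibniz_lie, hk, lie_zero, add_zero]
  exact subset_lieSpan ⟨_, rfl⟩

theorem normalizer_lieSpan_bracket_eq_top {K : Type*} [Field K] [LieAlgebra K L]
    [FiniteDimensional K L] {Φ : BilinForm K L} (hΦ : Φ.lieInvariant L)
    (hΦ_aniso : Φ.toQuadraticMap.Anisotropic) (h : L) :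
    (lieSpan K L {v : L | ∃ w : L, v = ⁅w, h⁆}).normalizer = ⊤ := by
  set S := lieSpan K L {v : L | ∃ w : L, v = ⁅w, h⁆}
  set U := Submodule.span K {v : L | ∃ w : L, v = ⁅w, h⁆}
  have hUS : U ≤ S.toSubmodule := Submodule.span_le.2 subset_lieSpan
  have hperp : Φ.orthogonal U ≤ S.normalizer.toSubmodule := fun k hk =>
    mem_normalizer_lieSpan_of_lie_eq_zero <|
      lie_eq_zero_of_forall_apply_lie_eq_zero hΦ (BilinForm.separatingLeft_of_anisotropic hΦ_aniso)
        fun w => hk _ (Submodule.subset_span ⟨w, rfl⟩)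
  rw [← toSubmodule_inj, top_toSubmodule, eq_top_iff,
    ← (Φ.isCompl_orthogonal_of_anisotropic hΦ_aniso U).sup_eq_top]
  exact sup_le (hUS.trans S.le_normalizer) hperp

end InvariantForm

theorem lieSpan_bracket_range_eq_top_of_abelian_centralizer_general
    {L : Type*} [LieRing L] [LieAlgebra ℝ L] [FiniteDimensional ℝ L]
    (B : L →ₗ[ℝ] L →ₗ[ℝ] ℝ)
    (hposdef : ∀ v : L, v ≠ 0 → 0 < B v v)
    (hinv : ∀ x y z : L, B ⁅x, y⁆ z + B y ⁅x, z⁆ = 0)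
    (hss : ∀ I : LieIdeal ℝ L, (∀ a b : L, a ∈ I → b ∈ I → ⁅a, b⁆ = 0) → I = ⊥)
    (h : L)
    (hcen : ∀ a b : L, ⁅a, h⁆ = 0 → ⁅b, h⁆ = 0 → ⁅a, b⁆ = 0) :
    LieSubalgebra.lieSpan ℝ L {v : L | ∃ w : L, v = ⁅w, h⁆} = ⊤ := by
  have hB : LinearMap.BilinMap.toQuadraticMap B |>.Anisotropic := fun v hv =>
    by_contra fun hne => (hposdef v hne).ne' hv
  have hBinv : BilinForm.lieInvariant L B := fun x y z => eq_neg_of_add_eq_zero_left (hinv x y z)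
  set S := LieSubalgebra.lieSpan ℝ L {v : L | ∃ w : L, v = ⁅w, h⁆}
  have hS : S.normalizer = ⊤ := normalizer_lieSpan_bracket_eq_top hBinv hB h
  obtain ⟨I, hI⟩ := (LieSubalgebra.exists_lieIdeal_coe_eq_iff ℝ S).2 fun x y hy =>
    S.ideal_in_normalizer (by simp [hS]) hy
  have hbracket_mem : ∀ w : L, ⁅w, h⁆ ∈ I := fun w => by
    rw [← LieIdeal.mem_toLieSubalgebra, hI]
    exact LieSubalgebra.subset_lieSpan ⟨w, rfl⟩
  have hcentral : ∀ a ∈ LieAlgebra.InvariantForm.orthogonal B hBinv I, ⁅a, h⁆ = 0 :=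
    fun a ha => lie_eq_zero_of_forall_apply_lie_eq_zero hBinv
      (BilinForm.separatingLeft_of_anisotropic hB) fun w => ha _ (hbracket_mem w)
  have hperp : LieAlgebra.InvariantForm.orthogonal B hBinv I = ⊥ :=
    hss _ fun a b ha hb => hcen a b (hcentral a ha) (hcentral b hb)
  have hcompl := BilinForm.isCompl_orthogonal_of_anisotropic hB I.toSubmodule
  rw [← LieAlgebra.InvariantForm.orthogonal_toSubmodule B hBinv, hperp,
    LieSubmodule.bot_toSubmodule] at hcompl
  rw [← hI, ← LieSubalgebra.toSubmodule_inj]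
  simpa using eq_top_of_isCompl_bot hcompl

/-- Let `g` be a finite-dimensional real Lie algebra with an invariant
inner product which is semisimple in the sense that it has no nonzero abelian ideals.
If `h ∈ g` has abelian centralizer, then the Lie subalgebra generated by the subspace
`[g,h] = {⁅x,h⁆ | x ∈ g}` is all of `g`. -/
theorem lieSpan_bracket_range_eq_top_of_abelian_centralizer
    {L : Type*} [LieRing L] [LieAlgebra ℝ L] [FiniteDimensional ℝ L]
    (B : L →ₗ[ℝ] L →ₗ[ℝ] ℝ)
    (hsymm : ∀ x y : L, B x y = B y x)
    (hposdef : ∀ v : L, v ≠ 0 → 0 < B v v)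
    (hinv : ∀ x y z : L, B ⁅x, y⁆ z + B y ⁅x, z⁆ = 0)
    (hss : ∀ I : LieIdeal ℝ L, (∀ a b : L, a ∈ I → b ∈ I → ⁅a, b⁆ = 0) → I = ⊥)
    (h : L)
    (hcen : ∀ a b : L, ⁅a, h⁆ = 0 → ⁅b, h⁆ = 0 → ⁅a, b⁆ = 0) :
    LieSubalgebra.lieSpan ℝ L {v : L | ∃ w : L, v = ⁅w, h⁆} = ⊤ :=
  lieSpan_bracket_range_eq_top_of_abelian_centralizer_general B hposdef hinv hss h hcen
end
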